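/- arXiv:2106.11620 — 2 statements merged into one kernel-verified Lean document; each statement's English description precedes it below -/
import Mathlib

section
/- Let 2 ≤ p₂ < q₁, σ > 0, B₁ ≥ 1, and let α₁, E₁, h be as above. Suppose α₂ > α₁ satisfies E₀ = h(α₂) for some E₀ ≥ 0. Then α₂/α₁ ≥ ((q₁+σ)(1/p₂ − E₀/α₁))^{p₂/(q₁+σ−p₂)}. -/
/-!
Put `t = α₂ / α₁` and `r = (q₁ + σ) / p₂ > 1`. The identity defining `α₁` makes `h` homogeneous
along the ray through `α₁`: `h (α₁ t) = α₁ (t / p₂ - t ^ r / (q₁ + σ))`. Hence `E₀ ≥ 0` means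
`t ^ (r - 1) ≤ r`, and the base of the claimed power is `r (1 - t) + t ^ r`. That number is
nonnegative by Bernoulli's inequality and at most `t ^ (r - 1)` because it differs from it by
`(t - 1) (t ^ (r - 1) - r) ≤ 0`; taking the `1 / (r - 1)`-th power gives `t`.
-/

open Real

lemma mul_one_sub_add_rpow_nonneg {r t : ℝ} (hr : 1 ≤ r) (ht : 0 ≤ t) :
    0 ≤ r * (1 - t) + t ^ r := by
  have bernoulli := one_add_mul_self_le_rpow_one_add (s := t - 1) (by linarith) hr
  rw [add_sub_cancel] at bernoulli
  linarith

lemma mul_one_sub_add_rpow_le_rpow_sub_one {r t : ℝ} (ht : 1 ≤ t) (hu : t ^ (r - 1) ≤ r) :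
    r * (1 - t) + t ^ r ≤ t ^ (r - 1) := by
  have hsplit : t ^ r = t * t ^ (r - 1) := by
    rw [rpow_sub_one (by positivity)]; field_simp
  have := mul_le_mul_of_nonneg_left hu (sub_nonneg.2 ht)
  nlinarith

lemma mul_one_sub_add_rpow_rpow_inv_le {r t : ℝ} (hr : 1 < r) (ht : 1 ≤ t)
    (hu : t ^ (r - 1) ≤ r) : (r * (1 - t) + t ^ r) ^ (r - 1)⁻¹ ≤ t :=
  calc (r * (1 - t) + t ^ r) ^ (r - 1)⁻¹
      ≤ (t ^ (r - 1)) ^ (r - 1)⁻¹ :=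
        rpow_le_rpow (mul_one_sub_add_rpow_nonneg hr.le (by linarith))
          (mul_one_sub_add_rpow_le_rpow_sub_one ht hu) (by simp only [inv_nonneg]; linarith)
    _ = t := rpow_rpow_inv (by linarith) (by linarith)

-- With `r = A / p`, the condition says `t ^ r ≤ r * t`, i.e. `t ^ (r - 1) ≤ r`.
lemma mul_one_div_sub_rpow_le {p A t : ℝ} (hp : 0 < p) (hpA : p < A) (ht : 1 ≤ t)
    (hE : 0 ≤ t / p - A⁻¹ * t ^ (A / p)) :
    (A * (1 / p - (t / p - A⁻¹ * t ^ (A / p)))) ^ (p / (A - p)) ≤ t := by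
  set r := A / p with hr
  have hr1 : 1 < r := (one_lt_div hp).2 hpA
  have hA : A = r * p := by rw [hr]; field_simp
  have hexp : p / (A - p) = (r - 1)⁻¹ := by rw [hA]; field_simp
  have hlin : A * (1 / p - (t / p - A⁻¹ * t ^ r)) = r * (1 - t) + t ^ r := by
    rw [hA]; field_simp; ring
  have hu : t ^ (r - 1) ≤ r := by
    have ht0 : 0 < t := by linarith
    rw [hA] at hE
    rw [rpow_sub_one ht0.ne', div_le_iff₀ ht0]
    have := mul_le_mul_of_nonneg_left hE (by positivity : 0 ≤ r * p)
    field_simp at this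
    linarith
  rw [hexp, hlin]
  exact mul_one_sub_add_rpow_rpow_inv_le hr1 ht hu

lemma div_sub_mul_rpow_div_eq {p r M D α t c : ℝ} (hα : 0 < α) (ht : 0 ≤ t) (hD : D ≠ 0)
    (hc : M * α ^ (r - 1) / D = c) :
    α * t / p - M * (α * t) ^ r / D = α * (t / p - c * t ^ r) := by
  rw [← hc, mul_rpow hα.le ht, rpow_sub_one hα.ne']
  field_simp

lemma rpow_mul_rpow_div_rpow_sub_one {p A B D : ℝ} (hp : 0 < p) (hpA : p < A) (hB : 0 < B)
    (hD : 0 < D) :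
    B ^ A * ((D * B ^ (-A) / A) ^ (p / (A - p))) ^ (A / p - 1) / D = A⁻¹ := by
  have hA : 0 < A := by linarith
  have hexp : p / (A - p) * (A / p - 1) = 1 := by
    field_simp [(sub_pos.2 hpA).ne']
  rw [← rpow_mul (by positivity), hexp, rpow_one, rpow_neg hB.le]
  field_simp

theorem alpha2_ratio_lower_bound (p₂ q₁ σ B₁ : ℝ) (hp : 2 ≤ p₂) (hpq : p₂ < q₁)
    (hσ : 0 < σ) (hB : 1 ≤ B₁) (h : ℝ → ℝ) (α₁ α₂ E₀ : ℝ)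
    (hh : h = fun ξ : ℝ => ξ / p₂ - B₁ ^ (q₁ + σ) * ξ ^ ((q₁ + σ) / p₂) / (Real.exp 1 * σ * q₁))
    (hα : α₁ = (Real.exp 1 * σ * q₁ * B₁ ^ (-(q₁ + σ)) / (q₁ + σ)) ^ (p₂ / (q₁ - p₂ + σ)))
    (hα₂ : α₁ < α₂) (hE₀ : 0 ≤ E₀) (hEh : E₀ = h α₂) :
    ((q₁ + σ) * (1 / p₂ - E₀ / α₁)) ^ (p₂ / (q₁ + σ - p₂)) ≤ α₂ / α₁ := by
  have hp₂ : 0 < p₂ := by linarith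
  have hq₁ : 0 < q₁ := by linarith
  have hpA : p₂ < q₁ + σ := by linarith
  have hα₁ : 0 < α₁ := by rw [hα]; positivity
  rw [show q₁ - p₂ + σ = q₁ + σ - p₂ by ring] at hα
  have hscale := rpow_mul_rpow_div_rpow_sub_one hp₂ hpA (by linarith : 0 < B₁)
    (by positivity : 0 < Real.exp 1 * σ * q₁)
  rw [← hα] at hscale
  set t := α₂ / α₁ with ht
  have ht₁ : 1 ≤ t := (one_le_div hα₁).2 hα₂.le
  have hα₂t : α₂ = α₁ * t := by rw [ht]; field_simp
  have hE : E₀ / α₁ = t / p₂ - (q₁ + σ)⁻¹ * t ^ ((q₁ + σ) / p₂) := by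
    rw [hEh, hh, hα₂t]
    dsimp only
    rw [div_sub_mul_rpow_div_eq hα₁ (by linarith) (by positivity) hscale]
    field_simp
  have hE₀' : 0 ≤ E₀ / α₁ := by positivity
  rw [hE] at hE₀' ⊢
  exact mul_one_div_sub_rpow_le hp₂ hpA ht₁ hE₀'
end

section
/- Let A, B > 0 and ϖ > 0, and let θ : [0,∞) → (0,∞) be differentiable with θ'(t) ≤ −θ(t)(A − Bθ(t)^ϖ) and Bθ(t)^ϖ < A for all t ≥ 0. Then θ(t)^ϖ/(A − Bθ(t)^ϖ) ≤ (θ(0)^ϖ/(A − Bθ(0)^ϖ))·e^{−Aϖt}, and consequently θ(t) ≤ (Aθ(0)^ϖ/(A − Bθ(0)^ϖ))^{1/ϖ}·e^{−At} for all t ≥ 0. -/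
/-!
Put `u = θ ^ ϖ` and `q = u / (A - B u)`. The differential inequality for `θ` becomes
`u' ≤ -ϖ u (A - B u)`, and since `d/du [u / (A - B u)] = A / (A - B u)²` this linearises to
`q' ≤ -A ϖ q`, so Grönwall's inequality gives `q t ≤ q 0 e^{-Aϖt}`. Finally
`u = q (A - B u) ≤ A q`, and taking `ϖ`-th roots bounds `θ`.
-/

open Real

theorem le_mul_exp_of_hasDerivAt_le_mul {f f' : ℝ → ℝ} {K : ℝ}
    (hf : ∀ t, 0 ≤ t → HasDerivAt f (f' t) t) (hle : ∀ t, 0 ≤ t → f' t ≤ K * f t)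
    {t : ℝ} (ht : 0 ≤ t) : f t ≤ f 0 * exp (K * t) := by
  have := le_gronwallBound_of_liminf_deriv_right_le (δ := f 0) (ε := 0) (b := t)
    (fun x hx => (hf x hx.1).continuousAt.continuousWithinAt)
    (fun x hx _ hr => (hf x hx.1).hasDerivWithinAt.liminf_right_slope_le hr)
    le_rfl (fun x hx => by simpa using hle x hx.1) t ⟨ht, le_rfl⟩
  simpa [gronwallBound_ε0] using this

theorem HasDerivAt.div_const_sub_const_mul {u : ℝ → ℝ} {u' A B t : ℝ}
    (hu : HasDerivAt u u' t) (hne : A - B * u t ≠ 0) :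
    HasDerivAt (fun s => u s / (A - B * u s)) (A * u' / (A - B * u t) ^ 2) t :=
  (hu.div ((hu.const_mul B).const_sub A) hne).congr_deriv (by ring)

theorem mul_mul_rpow_sub_one_le {x x' k p : ℝ} (hx : 0 < x) (hp : 0 ≤ p)
    (h : x' ≤ -x * k) : x' * p * x ^ (p - 1) ≤ -p * x ^ p * k := by
  calc x' * p * x ^ (p - 1) ≤ -x * k * p * x ^ (p - 1) := by gcongr
    _ = -p * x ^ p * k := by rw [rpow_sub_one hx.ne']; field_simp

theorem mul_div_sq_le_neg_mul_div {u u' A B c : ℝ} (hA : 0 ≤ A) (hd : 0 < A - B * u)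
    (h : u' ≤ -c * u * (A - B * u)) :
    A * u' / (A - B * u) ^ 2 ≤ -(A * c) * (u / (A - B * u)) := by
  calc A * u' / (A - B * u) ^ 2 ≤ A * (-c * u * (A - B * u)) / (A - B * u) ^ 2 := by gcongr
    _ = -(A * c) * (u / (A - B * u)) := by field_simp

theorem le_mul_of_div_const_sub_const_mul_le {u A B M : ℝ} (hB : 0 ≤ B) (hu : 0 ≤ u)
    (hd : 0 < A - B * u) (h : u / (A - B * u) ≤ M) : u ≤ A * M := by
  rw [div_le_iff₀ hd] at h
  nlinarith [mul_nonneg hB hu]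

theorem exponential_decay (A B ϖ : ℝ) (hA : 0 < A) (hB : 0 < B) (hϖ : 0 < ϖ)
    (θ θ' : ℝ → ℝ)
    (hd : ∀ t : ℝ, 0 ≤ t → HasDerivAt θ (θ' t) t)
    (hpos : ∀ t : ℝ, 0 ≤ t → 0 < θ t)
    (hineq : ∀ t : ℝ, 0 ≤ t → θ' t ≤ -θ t * (A - B * θ t ^ ϖ))
    (hsmall : ∀ t : ℝ, 0 ≤ t → B * θ t ^ ϖ < A) :
    ∀ t : ℝ, 0 ≤ t →
      θ t ^ ϖ / (A - B * θ t ^ ϖ) ≤ θ 0 ^ ϖ / (A - B * θ 0 ^ ϖ) * Real.exp (-(A * ϖ * t)) ∧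
      θ t ≤ (A * θ 0 ^ ϖ / (A - B * θ 0 ^ ϖ)) ^ (1 / ϖ) * Real.exp (-(A * t)) := by
  have hgap : ∀ t, 0 ≤ t → 0 < A - B * θ t ^ ϖ := fun t ht => sub_pos.2 (hsmall t ht)
  have hu : ∀ t, 0 ≤ t → HasDerivAt (fun s => θ s ^ ϖ) (θ' t * ϖ * θ t ^ (ϖ - 1)) t :=
    fun t ht => (hd t ht).rpow_const (Or.inl (hpos t ht).ne')
  have hratio : ∀ t, 0 ≤ t → θ t ^ ϖ / (A - B * θ t ^ ϖ) ≤
      θ 0 ^ ϖ / (A - B * θ 0 ^ ϖ) * exp (-(A * ϖ * t)) := fun t ht => by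
    rw [← neg_mul]
    exact le_mul_exp_of_hasDerivAt_le_mul
      (fun t ht => (hu t ht).div_const_sub_const_mul (hgap t ht).ne')
      (fun t ht => mul_div_sq_le_neg_mul_div hA.le (hgap t ht)
        (mul_mul_rpow_sub_one_le (hpos t ht) hϖ.le (hineq t ht))) ht
  intro t ht
  refine ⟨hratio t ht, ?_⟩
  have hupos : 0 ≤ θ t ^ ϖ := (rpow_pos_of_pos (hpos t ht) ϖ).le
  have hubound := le_mul_of_div_const_sub_const_mul_le hB.le hupos (hgap t ht) (hratio t ht)
  have hq0 : 0 ≤ A * θ 0 ^ ϖ / (A - B * θ 0 ^ ϖ) :=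
    div_nonneg (mul_pos hA (rpow_pos_of_pos (hpos 0 le_rfl) ϖ)).le (hgap 0 le_rfl).le
  calc θ t = (θ t ^ ϖ) ^ (1 / ϖ) := by rw [one_div, rpow_rpow_inv (hpos t ht).le hϖ.ne']
    _ ≤ (A * θ 0 ^ ϖ / (A - B * θ 0 ^ ϖ) * exp (-(A * ϖ * t))) ^ (1 / ϖ) := by
      gcongr
      rw [mul_div_assoc, mul_assoc]
      exact hubound
    _ = (A * θ 0 ^ ϖ / (A - B * θ 0 ^ ϖ)) ^ (1 / ϖ) * exp (-(A * t)) := by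
      rw [mul_rpow hq0 (exp_pos _).le, ← exp_mul]
      congr 2
      field_simp
end
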